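/- arXiv:2008.07003 — 4 statements merged into one kernel-verified Lean document; each statement's English description precedes it below -/
import Mathlib

section
/- For every natural number n ≥ 1 and every real s, the n-th derivative of the standard Gaussian density satisfies |γ^{(n)}(s)| ≤ (1/√(2π))·√(n!) ≤ n^{n/2}. -/
open Real MeasureTheory Complex FourierTransform Nat

noncomputable def gauss (s : ℝ) : ℝ := (Real.sqrt (2 * Real.pi))⁻¹ * Real.exp (-s ^ 2 / 2)

noncomputable def gf : ℝ → ℂ := fun x => Complex.exp (-(2*(π:ℂ)^2) * x^2)

lemma pow_le_fac_exp (k : ℕ) {x : ℝ} (hx : 0 ≤ x) : x ^ k ≤ (k ! : ℝ) * Real.exp x := by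
  have h := Real.sum_le_exp_of_nonneg hx (k+1)
  have h2 : x ^ k / k ! ≤ Real.exp x := by
    refine le_trans ?_ h
    exact Finset.single_le_sum (f := fun i => x ^ i / i !)
      (fun i _ => by positivity) (Finset.self_mem_range_succ k)
  rw [div_le_iff₀ (by positivity)] at h2
  calc x ^ k ≤ Real.exp x * (k ! : ℝ) := h2
  _ = (k ! : ℝ) * Real.exp x := by ring


lemma key_gamma (n : ℕ) : 2 ^ n * Real.Gamma (((n:ℝ)+1)/2) ^ 2 ≤ π * (n ! : ℝ) := by
  induction n using Nat.strong_induction_on with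
  | _ n ih =>
    match n with
    | 0 =>
        norm_num
        rw [Real.Gamma_one_half_eq, Real.sq_sqrt Real.pi_pos.le]
    | 1 =>
        norm_num [Real.Gamma_one]
        linarith [Real.pi_gt_three]
    | (k+2) =>
        have hk := ih k (by omega)
        have harg : ((((k:ℕ)+2:ℕ):ℝ)+1)/2 = ((k:ℝ)+1)/2 + 1 := by push_cast; ring
        have hne : ((k:ℝ)+1)/2 ≠ 0 := by positivity
        rw [harg, Real.Gamma_add_one hne]
        have hfac : (((k+2)! : ℕ) : ℝ) = ((k:ℝ)+2) * ((k:ℝ)+1) * (k ! : ℝ) := by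
          push_cast [Nat.factorial_succ]; ring
        have hG2 : (0:ℝ) ≤ Real.Gamma (((k:ℝ)+1)/2) ^ 2 := sq_nonneg _
        calc 2 ^ (k+2) * ((((k:ℝ)+1)/2) * Real.Gamma (((k:ℝ)+1)/2)) ^ 2
            = ((k:ℝ)+1)^2 * (2 ^ k * Real.Gamma (((k:ℝ)+1)/2) ^ 2) := by ring
          _ ≤ ((k:ℝ)+1)^2 * (π * (k ! : ℝ)) := by
              apply mul_le_mul_of_nonneg_left hk (by positivity)
          _ ≤ π * ((k+2)! : ℕ) := by
              rw [hfac]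
              have h1 : (0:ℝ) < (k ! : ℝ) := by positivity
              nlinarith [Real.pi_pos, h1]


lemma gf_eq (x : ℝ) : gf x = ((Real.exp (-(2*π^2) * x^2) : ℝ) : ℂ) := by
  rw [gf, Complex.ofReal_exp]
  congr 1
  push_cast
  ring

lemma norm_gf (x : ℝ) : ‖gf x‖ = Real.exp (-(2*π^2) * x^2) := by
  rw [gf_eq, Complex.norm_real, Real.norm_eq_abs, Real.abs_exp]

lemma integrable_aux (k : ℕ) : Integrable (fun x : ℝ => x ^ k • gf x) := by
  have hc : Continuous fun x : ℝ => x ^ k • gf x := by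
    apply Continuous.smul (continuous_pow k)
    exact Complex.continuous_exp.comp (by continuity)
  have hint : Integrable (fun x : ℝ => ((k ! : ℝ) * Real.exp (1/4)) * Real.exp (-(2*π^2-1) * x^2)) := by
    apply Integrable.const_mul
    apply integrable_exp_neg_mul_sq
    nlinarith [Real.pi_gt_three]
  refine hint.mono' hc.aestronglyMeasurable (Filter.Eventually.of_forall fun x => ?_)
  rw [norm_smul, norm_gf]
  have h1 : ‖x ^ k‖ = |x| ^ k := by rw [norm_pow]; rfl
  rw [h1]
  have h2 : |x| ^ k ≤ (k ! : ℝ) * Real.exp |x| := pow_le_fac_exp k (abs_nonneg x)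
  have h3 : |x| ≤ 1/4 + x^2 := by nlinarith [sq_nonneg (|x| - 1/2), _root_.sq_abs x]
  have h4 : |x| ^ k * Real.exp (-(2*π^2) * x^2) ≤
      (k ! : ℝ) * Real.exp |x| * Real.exp (-(2*π^2) * x^2) := by
    apply mul_le_mul_of_nonneg_right h2 (Real.exp_nonneg _)
  refine h4.trans ?_
  rw [show ((k ! : ℝ) * Real.exp (1/4)) * Real.exp (-(2*π^2-1) * x^2)
      = (k ! : ℝ) * (Real.exp (1/4) * Real.exp (-(2*π^2-1) * x^2)) by ring,
    mul_assoc, ← Real.exp_add, ← Real.exp_add]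
  apply mul_le_mul_of_nonneg_left _ (by positivity)
  apply Real.exp_le_exp.mpr
  nlinarith [h3]

lemma moment (n : ℕ) : ∫ x : ℝ, |x| ^ n * Real.exp (-(2*π^2) * x^2)
    = (2*π^2) ^ (-((n:ℝ)+1)/2) * Real.Gamma (((n:ℝ)+1)/2) := by
  have hb : (0:ℝ) < 2*π^2 := by positivity
  have h := _root_.integral_rpow_mul_exp_neg_mul_rpow (p := 2) (q := (n:ℝ)) (b := 2*π^2)
    zero_lt_two (by linarith [(Nat.cast_nonneg n : (0:ℝ) ≤ n)]) hb
  have heq : ∀ x : ℝ, x ^ (n:ℝ) * Real.exp (-(2*π^2) * x ^ (2:ℝ))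
      = x ^ n * Real.exp (-(2*π^2) * x^2) := by
    intro x
    rw [Real.rpow_natCast, show (2:ℝ) = ((2:ℕ):ℝ) by norm_num, Real.rpow_natCast]
  rw [show ∫ x in Set.Ioi (0:ℝ), x ^ (n:ℝ) * Real.exp (-(2*π^2) * x ^ (2:ℝ))
      = ∫ x in Set.Ioi (0:ℝ), x ^ n * Real.exp (-(2*π^2) * x^2) by
    exact integral_congr_ae (Filter.Eventually.of_forall fun x => heq x)] at h
  have habs : ∫ x : ℝ, |x| ^ n * Real.exp (-(2*π^2) * x^2)
      = 2 * ∫ x in Set.Ioi (0:ℝ), x ^ n * Real.exp (-(2*π^2) * x^2) := by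
    rw [← integral_comp_abs (f := fun x => x ^ n * Real.exp (-(2*π^2) * x^2))]
    congr 1
    ext x
    rw [_root_.sq_abs x]
  rw [habs, h]
  ring


lemma fourier_gf : 𝓕 gf = fun t : ℝ => ((gauss t : ℝ) : ℂ) := by
  have h2π : (0:ℝ) < 2 * π := by positivity
  have h := fourier_gaussian_pi (b := ((2*π : ℝ) : ℂ)) (by simpa using h2π)
  have hgf : gf = fun x : ℝ => Complex.exp (-(π:ℂ) * ((2*π:ℝ):ℂ) * x^2) := by
    funext x
    rw [gf]
    congr 1
    push_cast
    ring
  rw [hgf, h]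
  funext t
  have h1 : -(π:ℂ) / ((2*π:ℝ):ℂ) = -(1/2 : ℂ) := by
    rw [div_eq_iff (by simpa using h2π.ne')]
    push_cast
    ring
  rw [h1]
  have h2 : (1 : ℂ) / ((2*π:ℝ):ℂ) ^ (1/2 : ℂ) = ((Real.sqrt (2*π))⁻¹ : ℝ) := by
    rw [show ((1/2 : ℂ)) = ((1/2 : ℝ) : ℂ) by norm_num,
      ← Complex.ofReal_cpow h2π.le, Real.sqrt_eq_rpow, one_div, ← Complex.ofReal_inv]
  rw [h2, gauss]
  push_cast [Complex.ofReal_exp]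
  congr 2
  ring

lemma contDiff_gauss : ContDiff ℝ (⊤ : ℕ∞) gauss := by
  apply ContDiff.mul contDiff_const
  exact Real.contDiff_exp.comp (((contDiff_id.pow 2).neg).div_const 2)

lemma iteratedDeriv_ofReal (g : ℝ → ℝ) (hg : ContDiff ℝ (⊤ : ℕ∞) g) (n : ℕ) (x : ℝ) :
    iteratedDeriv n (fun t => ((g t : ℝ) : ℂ)) x = ((iteratedDeriv n g x : ℝ) : ℂ) := by
  have h : (fun t => ((g t : ℝ) : ℂ)) = Complex.ofRealCLM ∘ g := rfl
  rw [h, iteratedDeriv_eq_iteratedFDeriv, iteratedDeriv_eq_iteratedFDeriv,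
    ContinuousLinearMap.iteratedFDeriv_comp_left Complex.ofRealCLM hg.contDiffAt ((mod_cast le_top))]
  rfl


theorem main_bound (n : ℕ) (s : ℝ) :
    |iteratedDeriv n gauss s| ≤
      (2*π)^n * ((2*π^2) ^ (-((n:ℝ)+1)/2) * Real.Gamma (((n:ℝ)+1)/2)) := by
  have h1 : iteratedDeriv n (𝓕 gf) = 𝓕 (fun x : ℝ => (-2 * π * I * x) ^ n • gf x) :=
    Real.iteratedDeriv_fourier (N := (n : ℕ∞))
      (fun k _ => integrable_aux k) le_rfl
  have h2 : ((iteratedDeriv n gauss s : ℝ) : ℂ) = iteratedDeriv n (𝓕 gf) s := by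
    rw [fourier_gf, iteratedDeriv_ofReal gauss contDiff_gauss]
  have h3 : |iteratedDeriv n gauss s| = ‖iteratedDeriv n (𝓕 gf) s‖ := by
    rw [← h2, Complex.norm_real, Real.norm_eq_abs]
  rw [h3, h1]
  have h4 : ‖𝓕 (fun x : ℝ => (-2 * π * I * x) ^ n • gf x) s‖ ≤
      ∫ x : ℝ, ‖(-2 * π * I * (x:ℂ)) ^ n • gf x‖ :=
    VectorFourier.norm_fourierIntegral_le_integral_norm _ _ _ _ _
  refine h4.trans (le_of_eq ?_)
  have h5 : ∀ x : ℝ, ‖(-2 * π * I * (x:ℂ)) ^ n • gf x‖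
      = (2*π)^n * (|x| ^ n * Real.exp (-(2*π^2) * x^2)) := by
    intro x
    rw [norm_smul, norm_pow, norm_gf]
    have : ‖-2 * (π:ℂ) * I * (x:ℂ)‖ = (2*π) * |x| := by
      simp [map_mul, Complex.norm_real, abs_of_pos Real.pi_pos]
    rw [this, mul_pow, mul_assoc]
  simp_rw [h5]
  rw [integral_const_mul, moment]


theorem final (n : ℕ) :
    (2*π)^n * ((2*π^2) ^ (-((n:ℝ)+1)/2) * Real.Gamma (((n:ℝ)+1)/2)) ≤
      (Real.sqrt (2 * Real.pi))⁻¹ * Real.sqrt (Nat.factorial n) := by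
  have hc : (0:ℝ) < 2*π^2 := by positivity
  have hG : 0 < Real.Gamma (((n:ℝ)+1)/2) := Real.Gamma_pos_of_pos (by positivity)
  set G := Real.Gamma (((n:ℝ)+1)/2) with hGdef
  have hL : (0:ℝ) ≤ (2*π)^n * ((2*π^2) ^ (-((n:ℝ)+1)/2) * G) := by positivity
  have hR : (0:ℝ) ≤ (Real.sqrt (2*π))⁻¹ * Real.sqrt (n !) := by positivity
  rw [← pow_le_pow_iff_left₀ hL hR (two_ne_zero)]
  have he : ((2*π^2) ^ (-((n:ℝ)+1)/2))^2 = ((2*π^2)^(n+1))⁻¹ := by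
    rw [← Real.rpow_natCast ((2*π^2) ^ (-((n:ℝ)+1)/2)) 2, ← Real.rpow_mul hc.le]
    rw [show -((n:ℝ)+1)/2 * (2:ℕ) = -((n:ℝ)+1) by push_cast; ring]
    rw [Real.rpow_neg hc.le, show ((n:ℝ)+1) = ((n+1:ℕ):ℝ) by push_cast; ring,
      Real.rpow_natCast]
  have hsq : ((Real.sqrt (2*π))⁻¹ * Real.sqrt (n !))^2 = (2*π)⁻¹ * (n ! : ℝ) := by
    rw [mul_pow, inv_pow, Real.sq_sqrt (by positivity), Real.sq_sqrt (by positivity)]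
  rw [hsq, mul_pow, mul_pow ((2*π^2) ^ (-((n:ℝ)+1)/2)) G 2, he]
  have h1 : G^2 ≤ π * (n ! : ℝ) / 2^n := by
    rw [le_div_iff₀ (by positivity)]
    linarith [key_gamma n]
  calc (((2:ℝ)*π)^n) ^ 2 * (((2*π^2)^(n+1))⁻¹ * G^2)
      ≤ (((2:ℝ)*π)^n) ^ 2 * (((2*π^2)^(n+1))⁻¹ * (π * (n ! : ℝ)/2^n)) := by
        apply mul_le_mul_of_nonneg_left _ (by positivity)
        exact mul_le_mul_of_nonneg_left h1 (by positivity)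
    _ = (2*π)⁻¹ * (n ! : ℝ) := by
        field_simp
        ring

theorem part2 (n : ℕ) :
    (Real.sqrt (2 * Real.pi))⁻¹ * Real.sqrt (Nat.factorial n) ≤ (n : ℝ) ^ ((n : ℝ) / 2) := by
  have h1 : (Real.sqrt (2*π))⁻¹ ≤ 1 := by
    rw [inv_le_one_iff₀]
    right
    rw [show (1:ℝ) = Real.sqrt 1 by simp]
    exact Real.sqrt_le_sqrt (by linarith [Real.pi_gt_three])
  calc (Real.sqrt (2*π))⁻¹ * Real.sqrt (n !) ≤ 1 * Real.sqrt (n !) := by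
        apply mul_le_mul_of_nonneg_right h1 (Real.sqrt_nonneg _)
    _ = Real.sqrt (n !) := one_mul _
    _ ≤ Real.sqrt ((n:ℝ)^n) := by
        apply Real.sqrt_le_sqrt
        exact_mod_cast Nat.factorial_le_pow n
    _ = (n : ℝ) ^ ((n : ℝ) / 2) := by
        rw [Real.sqrt_eq_rpow, ← Real.rpow_natCast (n:ℝ) n, ← Real.rpow_mul (Nat.cast_nonneg n)]
        congr 1
        ring


theorem stmt4 (n : ℕ) (hn : 1 ≤ n) (s : ℝ) :
    |iteratedDeriv n gauss s| ≤ (Real.sqrt (2 * Real.pi))⁻¹ * Real.sqrt (Nat.factorial n) ∧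
    (Real.sqrt (2 * Real.pi))⁻¹ * Real.sqrt (Nat.factorial n) ≤ (n : ℝ) ^ ((n : ℝ) / 2) := by
  exact ⟨(main_bound n s).trans (final n), part2 n⟩
end

section
/- The two expressions for Owen's T function agree: for all real h and σ, (1/(2π))·(arctan σ − ∫_0^h ∫_0^{σx} e^{-(x²+y²)/2} dy dx) = (1/(2π))·∫_0^σ e^{-h²(1+x²)/2}/(1+x²) dx. -/
/-!
Substituting `y = t x` in the inner integral turns the double integral over the triangle into
`∫₀^σ ∫₀^h x e^{-(1+t²)x²/2} dx dt`. After swapping the order of integration, the inner integral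
is elementary and equals `(1 - e^{-h²(1+t²)/2}) / (1+t²)`; the constant part integrates to
`arctan σ`.
-/

open Real intervalIntegral Set

theorem integral_mul_exp_neg_mul_sq {a : ℝ} (ha : a ≠ 0) (h : ℝ) :
    ∫ x in (0:ℝ)..h, x * exp (-a * x ^ 2) = (1 - exp (-a * h ^ 2)) / (2 * a) := by
  have hderiv : ∀ x : ℝ,
      HasDerivAt (fun x => exp (-a * x ^ 2) / -(2 * a)) (x * exp (-a * x ^ 2)) x := fun x =>
    (((hasDerivAt_pow 2 x).const_mul (-a)).exp.div_const _).congr_deriv (by field_simp; ring)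
  rw [integral_eq_sub_of_hasDerivAt (fun x _ => hderiv x)
    ((by fun_prop : Continuous fun x : ℝ => x * exp (-a * x ^ 2)).intervalIntegrable _ _)]
  simp only [ne_eq, OfNat.ofNat_ne_zero, not_false_eq_true, zero_pow, mul_zero, exp_zero]
  field_simp
  ring

theorem integral_exp_neg_sq_add_sq_eq (σ x : ℝ) :
    ∫ y in (0:ℝ)..σ * x, exp (-(x ^ 2 + y ^ 2) / 2) =
      ∫ t in (0:ℝ)..σ, x * exp (-((1 + t ^ 2) / 2) * x ^ 2) := by
  have hsubst := mul_integral_comp_mul_right (f := fun y => exp (-(x ^ 2 + y ^ 2) / 2)) x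
    (a := 0) (b := σ)
  rw [zero_mul] at hsubst
  rw [← hsubst, ← integral_const_mul]
  ring_nf

theorem intervalIntegral_intervalIntegral_swap_of_continuous {E : Type*} [NormedAddCommGroup E]
    [NormedSpace ℝ E] {F : ℝ → ℝ → E} (hF : Continuous F.uncurry) (a b c d : ℝ) :
    ∫ x in a..b, ∫ y in c..d, F x y = ∫ y in c..d, ∫ x in a..b, F x y :=
  MeasureTheory.intervalIntegral_intervalIntegral_swap
    ((hF.locallyIntegrable.integrableOn_isCompact (isCompact_uIcc.prod isCompact_uIcc)).mono_set
      (prod_mono uIoc_subset_uIcc uIoc_subset_uIcc))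

theorem integral_integral_exp_neg_sq_add_sq (h σ : ℝ) :
    ∫ x in (0:ℝ)..h, ∫ y in (0:ℝ)..σ * x, exp (-(x ^ 2 + y ^ 2) / 2) =
      arctan σ - ∫ t in (0:ℝ)..σ, exp (-h ^ 2 * (1 + t ^ 2) / 2) / (1 + t ^ 2) := by
  calc ∫ x in (0:ℝ)..h, ∫ y in (0:ℝ)..σ * x, exp (-(x ^ 2 + y ^ 2) / 2)
      = ∫ t in (0:ℝ)..σ, ∫ x in (0:ℝ)..h, x * exp (-((1 + t ^ 2) / 2) * x ^ 2) := by
        simp_rw [integral_exp_neg_sq_add_sq_eq σ]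
        exact intervalIntegral_intervalIntegral_swap_of_continuous (by fun_prop) _ _ _ _
    _ = ∫ t in (0:ℝ)..σ, (1 / (1 + t ^ 2) - exp (-h ^ 2 * (1 + t ^ 2) / 2) / (1 + t ^ 2)) := by
        refine integral_congr fun t _ => ?_
        rw [integral_mul_exp_neg_mul_sq (by positivity)]
        field_simp
    _ = arctan σ - ∫ t in (0:ℝ)..σ, exp (-h ^ 2 * (1 + t ^ 2) / 2) / (1 + t ^ 2) := by
        have hpos : ∀ t : ℝ, 1 + t ^ 2 ≠ 0 := fun t => by positivity
        rw [integral_sub, integral_one_div_one_add_sq, arctan_zero, sub_zero]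
        · exact (continuous_const.div (by fun_prop) hpos).intervalIntegrable _ _
        · exact ((by fun_prop : Continuous fun t : ℝ => exp (-h ^ 2 * (1 + t ^ 2) / 2)).div
            (by fun_prop) hpos).intervalIntegrable _ _

theorem stmt5 (h σ : ℝ) :
    (1 / (2 * Real.pi)) *
        (Real.arctan σ - ∫ x in (0:ℝ)..h, ∫ y in (0:ℝ)..(σ * x), Real.exp (-(x ^ 2 + y ^ 2) / 2)) =
      (1 / (2 * Real.pi)) * ∫ x in (0:ℝ)..σ, Real.exp (-h ^ 2 * (1 + x ^ 2) / 2) / (1 + x ^ 2) := by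
  rw [integral_integral_exp_neg_sq_add_sq, sub_sub_cancel]
end

section
/- For h, σ ≥ 0, Owen's T function T(h,σ) equals the probability P[X ≥ h and 0 ≤ Y ≤ σX], where (X,Y) is a standard Gaussian vector in ℝ². -/
/-!
Write `F x = ∫_0^{σx} exp (-(x² + y²)/2) dy`. Fubini over vertical slices turns the integral of
the Gaussian over the region `{x ≥ h, 0 ≤ y ≤ σx}` into `∫_h^∞ F`. The substitution `y = xu` and a
second application of Fubini give `∫_0^∞ F = ∫_0^σ du / (1 + u²) = arctan σ`, hence
`∫_h^∞ F = arctan σ - ∫_0^h F`.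
-/

open MeasureTheory Set Real

theorem integral_Ioi_mul_exp_neg_mul_sq {b : ℝ} (hb : 0 < b) :
    ∫ x in Ioi (0 : ℝ), x * exp (-b * x ^ 2) = (2 * b)⁻¹ := by
  have := integral_mul_cexp_neg_mul_sq (b := (b : ℂ)) (by simpa using hb)
  rw [← Complex.ofReal_inj, ← integral_complex_ofReal]
  push_cast
  exact this

theorem integrable_exp_neg_sq_add_sq_div_two :
    Integrable fun p : ℝ × ℝ => exp (-(p.1 ^ 2 + p.2 ^ 2) / 2) := by
  have h1 : Integrable fun t : ℝ => exp (-(1 / 2) * t ^ 2) := integrable_exp_neg_mul_sq (by norm_num)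
  have := h1.mul_prod h1
  rw [← Measure.volume_eq_prod] at this
  refine this.congr (ae_of_all _ fun p => ?_)
  simp only [← exp_add]
  ring_nf

theorem intervalIntegral_exp_neg_sq_add_sq_eq_scaled (σ x : ℝ) :
    ∫ y in (0:ℝ)..(σ * x), exp (-(x ^ 2 + y ^ 2) / 2) =
      ∫ u in (0:ℝ)..σ, x * exp (-((1 + u ^ 2) / 2) * x ^ 2) := by
  have hsubst := intervalIntegral.mul_integral_comp_mul_left
    (f := fun y => exp (-(x ^ 2 + y ^ 2) / 2)) (a := 0) (b := σ) x
  rw [mul_zero, mul_comm x σ] at hsubst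
  rw [← hsubst, intervalIntegral.integral_const_mul]
  congr 1
  refine intervalIntegral.integral_congr fun u _ => ?_
  ring_nf

theorem integrableOn_mul_exp_neg_one_add_sq_mul_sq (σ : ℝ) :
    IntegrableOn (fun p : ℝ × ℝ => p.1 * exp (-((1 + p.2 ^ 2) / 2) * p.1 ^ 2))
      (Ioi 0 ×ˢ Ioc 0 σ) := by
  have hdom : IntegrableOn (fun p : ℝ × ℝ => p.1 * exp (-(1 / 2) * p.1 ^ 2) * 1)
      (Ioi 0 ×ˢ Ioc 0 σ) := by
    rw [IntegrableOn, Measure.volume_eq_prod, ← Measure.prod_restrict]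
    exact (integrable_mul_exp_neg_mul_sq (by norm_num)).restrict.mul_prod (integrable_const 1)
  refine hdom.mono' (by fun_prop) ?_
  filter_upwards [ae_restrict_mem (measurableSet_Ioi.prod measurableSet_Ioc)]
    with ⟨x, u⟩ ⟨hx, _⟩
  replace hx : 0 < x := hx
  rw [norm_of_nonneg (by positivity), mul_one]
  gcongr
  nlinarith [sq_nonneg u, sq_nonneg x]

theorem integral_Ioi_intervalIntegral_exp_neg_sq_add_sq_eq_arctan {σ : ℝ} (hσ : 0 ≤ σ) :
    ∫ x in Ioi 0, ∫ y in (0:ℝ)..(σ * x), exp (-(x ^ 2 + y ^ 2) / 2) = arctan σ := by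
  calc ∫ x in Ioi 0, ∫ y in (0:ℝ)..(σ * x), exp (-(x ^ 2 + y ^ 2) / 2)
      = ∫ x in Ioi 0, ∫ u in Ioc 0 σ, x * exp (-((1 + u ^ 2) / 2) * x ^ 2) := by
        simp only [intervalIntegral_exp_neg_sq_add_sq_eq_scaled, intervalIntegral.integral_of_le hσ]
    _ = ∫ u in Ioc 0 σ, ∫ x in Ioi 0, x * exp (-((1 + u ^ 2) / 2) * x ^ 2) :=
        integral_integral_swap (by
          rw [Measure.prod_restrict, ← Measure.volume_eq_prod]
          exact integrableOn_mul_exp_neg_one_add_sq_mul_sq σ)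
    _ = ∫ u in (0:ℝ)..σ, 1 / (1 + u ^ 2) := by
        rw [intervalIntegral.integral_of_le hσ]
        refine setIntegral_congr_fun measurableSet_Ioc fun u _ => ?_
        rw [integral_Ioi_mul_exp_neg_mul_sq (by positivity)]
        field_simp
    _ = arctan σ := by simp

def owenRegion (h σ : ℝ) : Set (ℝ × ℝ) := {p | h ≤ p.1 ∧ 0 ≤ p.2 ∧ p.2 ≤ σ * p.1}

theorem measurableSet_owenRegion (h σ : ℝ) : MeasurableSet (owenRegion h σ) := by
  unfold owenRegion; measurability

section Slices

variable {E : Type*} [NormedAddCommGroup E] [NormedSpace ℝ E] {f : ℝ × ℝ → E}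

theorem integral_indicator_owenRegion_slice (h σ x : ℝ) :
    ∫ y, (owenRegion h σ).indicator f (x, y) =
      (Ici h).indicator (fun x => ∫ y in Icc 0 (σ * x), f (x, y)) x := by
  by_cases hx : h ≤ x
  · rw [indicator_of_mem (mem_Ici.mpr hx), ← integral_indicator measurableSet_Icc]
    congr 1 with y
    simp [indicator_apply, owenRegion, hx]
  · rw [indicator_of_notMem (by simpa using hx)]
    simp [owenRegion, hx]

theorem integral_owenRegion (hf : Integrable f) (h σ : ℝ) :
    ∫ p in owenRegion h σ, f p = ∫ x in Ici h, ∫ y in Icc 0 (σ * x), f (x, y) := by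
  rw [← integral_indicator (measurableSet_owenRegion h σ), Measure.volume_eq_prod,
    integral_prod _ (by
      rw [← Measure.volume_eq_prod]; exact hf.indicator (measurableSet_owenRegion h σ))]
  simp only [integral_indicator_owenRegion_slice]
  exact integral_indicator measurableSet_Ici

theorem integrableOn_integral_owenRegion_slice (hf : Integrable f) (h σ : ℝ) :
    IntegrableOn (fun x => ∫ y in Icc 0 (σ * x), f (x, y)) (Ici h) := by
  rw [← integrable_indicator_iff measurableSet_Ici]
  have := (hf.indicator (measurableSet_owenRegion h σ)).integral_prod_left
  simpa only [integral_indicator_owenRegion_slice] using this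

end Slices

theorem stmt7 (h σ : ℝ) (hh : 0 ≤ h) (hσ : 0 ≤ σ) :
    (1 / (2 * Real.pi)) *
        (Real.arctan σ - ∫ x in (0:ℝ)..h, ∫ y in (0:ℝ)..(σ * x), Real.exp (-(x ^ 2 + y ^ 2) / 2)) =
      ∫ p in {p : ℝ × ℝ | h ≤ p.1 ∧ 0 ≤ p.2 ∧ p.2 ≤ σ * p.1},
        (1 / (2 * Real.pi)) * Real.exp (-(p.1 ^ 2 + p.2 ^ 2) / 2) := by
  set F : ℝ → ℝ := fun x => ∫ y in (0:ℝ)..(σ * x), exp (-(x ^ 2 + y ^ 2) / 2)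
  have hslice : ∀ x : ℝ, 0 ≤ x →
      ∫ y in Icc 0 (σ * x), exp (-(x ^ 2 + y ^ 2) / 2) = F x := fun x hx => by
    rw [integral_Icc_eq_integral_Ioc, ← intervalIntegral.integral_of_le (mul_nonneg hσ hx)]
  have hF : IntegrableOn F (Ioi 0) :=
    ((integrableOn_integral_owenRegion_slice integrable_exp_neg_sq_add_sq_div_two 0 σ).mono_set
      Ioi_subset_Ici_self).congr_fun (fun x hx => hslice x (le_of_lt hx)) measurableSet_Ioi
  have hRHS : ∫ p in owenRegion h σ, exp (-(p.1 ^ 2 + p.2 ^ 2) / 2) = ∫ x in Ioi h, F x := by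
    rw [integral_owenRegion integrable_exp_neg_sq_add_sq_div_two, integral_Ici_eq_integral_Ioi]
    exact setIntegral_congr_fun measurableSet_Ioi fun x hx => hslice x (hh.trans (le_of_lt hx))
  rw [integral_const_mul, ← integral_Ioi_intervalIntegral_exp_neg_sq_add_sq_eq_arctan hσ,
    ← intervalIntegral.integral_Ioi_sub_Ioi hF hh, sub_sub_cancel]
  exact congrArg _ hRHS.symm
end

section
/- For every nonnegative integer j, the functions φ_j(s) := (−1)^j·γ(s)·∑_{k=0}^∞ ((2j−1)!!/(2k+2j+1)!!)·s^{2k+1} satisfy d/ds (φ_j(s)/s) = φ_{j+1}(s), where (−1)!! = 1 by convention. -/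
/-- φ_j(s) = (−1)^j γ(s) ∑_k ((2j−1)!!/(2k+2j+1)!!) s^{2k+1}.
Note `2*j-1` uses truncated `ℕ` subtraction, so for `j = 0` it is `0‼ = 1`,
matching the convention `(−1)!! = 1`. -/
noncomputable def phij (j : ℕ) (s : ℝ) : ℝ :=
  (-1) ^ j * gauss s *
    ∑' k : ℕ, (Nat.doubleFactorial (2 * j - 1) : ℝ) /
      (Nat.doubleFactorial (2 * k + 2 * j + 1) : ℝ) * s ^ (2 * k + 1)

/-- The power-series version of φ_j(s)/s, well defined at `s = 0`. -/
noncomputable def phijDiv (j : ℕ) (s : ℝ) : ℝ :=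
  (-1) ^ j * gauss s *
    ∑' k : ℕ, (Nat.doubleFactorial (2 * j - 1) : ℝ) /
      (Nat.doubleFactorial (2 * k + 2 * j + 1) : ℝ) * s ^ (2 * k)

/-!
Write `φ_j(s)/s = (-1)^j γ(s) P_j(s²)` with the entire series `P_j(w) = ∑ a_{j,k} w^k`,
`a_{j,k} = (2j-1)‼/(2k+2j+1)‼`. Since `γ' = -sγ`, the claim reduces to
`P_j(w) - 2 P_j'(w) = P_{j+1}(w)`, which is the coefficient recursion
`a_{j,k} - 2(k+1) a_{j,k+1} = a_{j+1,k}`. Termwise differentiation is justified by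
`a_{j,k} ≤ (2j-1)‼/k!`, since `k! ≤ (2k)‼ ≤ (2k+2j+1)‼`.
-/

open Nat

theorem Nat.factorial_le_doubleFactorial_two_mul_add (m : ℕ) : ∀ k, k ! ≤ (2 * k + m)‼
  | 0 => by rw [Nat.factorial_zero, mul_zero, zero_add]; exact Nat.doubleFactorial_pos m
  | k + 1 => by
    rw [show 2 * (k + 1) + m = 2 * k + m + 2 by ring, Nat.doubleFactorial_add_two,
      Nat.factorial_succ]
    exact Nat.mul_le_mul (by omega) (factorial_le_doubleFactorial_two_mul_add m k)

section FactorialBound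

variable {a : ℕ → ℝ} {C : ℝ}

theorem summable_abs_mul_pow_of_abs_le_div_factorial (ha : ∀ k, |a k| ≤ C / k !) (r : ℝ) :
    Summable fun k => |a k * r ^ k| := by
  refine .of_nonneg_of_le (fun k => abs_nonneg _) (fun k => ?_)
    ((Real.summable_pow_div_factorial |r|).mul_left C)
  rw [abs_mul, abs_pow, mul_div_assoc', mul_div_right_comm]
  exact mul_le_mul_of_nonneg_right (ha k) (by positivity)

theorem abs_succ_mul_le_div_factorial (ha : ∀ k, |a k| ≤ C / k !) (k : ℕ) :
    |(k + 1) * a (k + 1)| ≤ C / k ! := by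
  have hk : (0 : ℝ) < k + 1 := by positivity
  rw [abs_mul, abs_of_pos hk, ← le_div_iff₀' hk, div_div, mul_comm]
  simpa [Nat.factorial_succ] using ha (k + 1)

theorem hasDerivAt_tsum_mul_pow_of_abs_le_div_factorial (ha : ∀ k, |a k| ≤ C / k !) (w : ℝ) :
    HasDerivAt (fun w => ∑' k, a k * w ^ k) (∑' k, (k + 1) * a (k + 1) * w ^ k) w := by
  set R := |w| + 1
  have hbound : ∀ n (y : ℝ), y ∈ Metric.ball 0 R →
      ‖a n * (n * y ^ (n - 1))‖ ≤ |a n| * n * R ^ (n - 1) := by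
    intro n y hy
    rw [mem_ball_zero_iff, Real.norm_eq_abs] at hy
    rw [Real.norm_eq_abs, abs_mul, abs_mul, abs_pow, Nat.abs_cast, ← mul_assoc]
    gcongr
  have hu : Summable fun n => |a n| * n * R ^ (n - 1) := by
    refine (summable_nat_add_iff 1).1 ?_
    refine ((summable_abs_mul_pow_of_abs_le_div_factorial
      (abs_succ_mul_le_div_factorial ha) R).congr fun k => ?_)
    rw [abs_mul, abs_mul, abs_pow, abs_of_pos (show (0:ℝ) < R by positivity),
      abs_of_pos (show (0:ℝ) < k + 1 by positivity)]
    push_cast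
    ring
  have hw : w ∈ Metric.ball 0 R := by
    rw [mem_ball_zero_iff, Real.norm_eq_abs]
    exact lt_add_one _
  have hderiv := hasDerivAt_tsum_of_isPreconnected hu Metric.isOpen_ball
    (convex_ball (0 : ℝ) R).isPreconnected (fun n y _ => (hasDerivAt_pow n y).const_mul (a n))
    hbound hw (summable_abs_mul_pow_of_abs_le_div_factorial ha w).of_abs hw
  refine hderiv.congr_deriv ?_
  rw [(Summable.of_norm_bounded hu fun n => hbound n w hw).tsum_eq_zero_add]
  simp only [Nat.cast_zero, zero_mul, mul_zero, zero_add, Nat.add_sub_cancel]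
  exact tsum_congr fun k => by push_cast; ring

end FactorialBound

theorem hasDerivAt_gauss (s : ℝ) : HasDerivAt gauss (-s * gauss s) s := by
  have h := ((hasDerivAt_pow 2 s).neg.div_const 2).exp.const_mul (Real.sqrt (2 * Real.pi))⁻¹
  refine h.congr_deriv ?_
  simp only [gauss, Pi.neg_apply]
  push_cast
  ring

noncomputable def phiCoeff (j k : ℕ) : ℝ := ((2 * j - 1)‼ : ℝ) / ((2 * k + 2 * j + 1)‼ : ℝ)

noncomputable def phiSeries (j : ℕ) (w : ℝ) : ℝ := ∑' k, phiCoeff j k * w ^ k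

theorem abs_phiCoeff_le (j k : ℕ) : |phiCoeff j k| ≤ (2 * j - 1)‼ / k ! := by
  have hk : (k ! : ℝ) ≤ (2 * k + 2 * j + 1)‼ := by
    exact_mod_cast add_assoc (2 * k) (2 * j) 1 ▸
      Nat.factorial_le_doubleFactorial_two_mul_add (2 * j + 1) k
  rw [phiCoeff, abs_of_nonneg (by positivity)]
  exact div_le_div_of_nonneg_left (by positivity) (by positivity) hk

theorem phiCoeff_sub_mul_phiCoeff_succ (j k : ℕ) :
    phiCoeff j k - 2 * (k + 1) * phiCoeff j (k + 1) = phiCoeff (j + 1) k := by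
  have hnum : (2 * (j + 1) - 1)‼ = (2 * j + 1) * (2 * j - 1)‼ := by
    rw [show 2 * (j + 1) - 1 = 2 * j + 1 by omega, Nat.doubleFactorial_add_one]
  have hden : (2 * (k + 1) + 2 * j + 1)‼ = (2 * k + 2 * j + 3) * (2 * k + 2 * j + 1)‼ := by
    rw [show 2 * (k + 1) + 2 * j + 1 = 2 * k + 2 * j + 1 + 2 by ring, Nat.doubleFactorial_add_two]
  have hden' : 2 * k + 2 * (j + 1) + 1 = 2 * (k + 1) + 2 * j + 1 := by ring
  have hpos : (0 : ℝ) < (2 * k + 2 * j + 1)‼ := by exact_mod_cast Nat.doubleFactorial_pos _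
  rw [phiCoeff, phiCoeff, phiCoeff, hden', hnum, hden]
  field_simp
  push_cast
  ring

theorem phiSeries_sub_two_mul_deriv (j : ℕ) (w : ℝ) :
    phiSeries j w - 2 * ∑' k, (k + 1) * phiCoeff j (k + 1) * w ^ k = phiSeries (j + 1) w := by
  have hsum := (summable_abs_mul_pow_of_abs_le_div_factorial (abs_phiCoeff_le j) w).of_abs
  have hsum' := (summable_abs_mul_pow_of_abs_le_div_factorial
    (abs_succ_mul_le_div_factorial (abs_phiCoeff_le j)) w).of_abs
  rw [phiSeries, phiSeries, ← tsum_mul_left, ← hsum.tsum_sub (hsum'.mul_left 2)]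
  exact tsum_congr fun k => by rw [← phiCoeff_sub_mul_phiCoeff_succ]; ring

theorem phijDiv_eq (j : ℕ) : phijDiv j = fun s => (-1) ^ j * (gauss s * phiSeries j (s ^ 2)) := by
  ext s
  simp only [phijDiv, phiSeries, phiCoeff, pow_mul, mul_assoc]

theorem phij_eq (j : ℕ) (s : ℝ) : phij j s = (-1) ^ j * gauss s * (s * phiSeries j (s ^ 2)) := by
  rw [phij, phiSeries, ← tsum_mul_left (a := s)]
  congr 1
  exact tsum_congr fun k => by rw [phiCoeff, pow_succ, pow_mul]; ring

theorem stmt12 (j : ℕ) (s : ℝ) : HasDerivAt (phijDiv j) (phij (j + 1) s) s := by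
  have hseries := (hasDerivAt_tsum_mul_pow_of_abs_le_div_factorial (abs_phiCoeff_le j)
    (s ^ 2)).comp s (hasDerivAt_pow 2 s)
  have hprod := ((hasDerivAt_gauss s).mul hseries).const_mul ((-1 : ℝ) ^ j)
  rw [phijDiv_eq]
  refine hprod.congr_deriv ?_
  rw [phij_eq, ← phiSeries_sub_two_mul_deriv, phiSeries, Function.comp_apply]
  push_cast
  ring
end
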